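/- For s > 0, define ξ₀(s) = ∫₀¹ ((1−x)/(1+x))·s·x^{s−1} dx. Then ξ₀ is differentiable on (0,∞) with ξ₀′(s) = ∫₀¹ 2 x^s (log x) / (1+x)² dx, and consequently ξ₀′(s) < 0, so ξ₀ is strictly decreasing on (0,∞). -/

import Mathlib

/-!
Integrating by parts against `d(x ^ s)` turns `ξ₀ s` into `∫₀¹ 2 x ^ s / (1 + x) ^ 2 dx`. In this
form the `s`-derivative of the integrand, `2 x ^ s log x / (1 + x) ^ 2`, is dominated by
`2 |log x|` uniformly in `s > 0`, so one may differentiate under the integral sign; the new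
integrand is negative on `(0, 1)`.
-/

open MeasureTheory Real Set Filter intervalIntegral

noncomputable def ξ₀ (s : ℝ) : ℝ :=
  ∫ x in (0:ℝ)..1, ((1 - x) / (1 + x)) * (s * x ^ (s - 1))

noncomputable def ξ₀' (s : ℝ) : ℝ :=
  ∫ x in (0:ℝ)..1, 2 * x ^ s * Real.log x / (1 + x) ^ 2

section UnitInterval

variable {h : ℝ → ℝ} {s : ℝ}

theorem integral_unitInterval_mul_deriv_rpow {g g' : ℝ → ℝ} (hg : ContinuousOn g (Icc 0 1))
    (hgg' : ∀ x ∈ Ioo (0:ℝ) 1, HasDerivAt g (g' x) x) (hg' : IntervalIntegrable g' volume 0 1)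
    (hs : 0 < s) :
    ∫ x in (0:ℝ)..1, g x * (s * x ^ (s - 1)) = g 1 - ∫ x in (0:ℝ)..1, g' x * x ^ s := by
  have hibp := integral_mul_deriv_eq_deriv_mul_of_hasDerivAt (v := fun x => x ^ s)
    (by rwa [uIcc_of_le zero_le_one]) (continuousOn_id.rpow_const fun _ _ => Or.inr hs.le)
    (by simpa using hgg')
    (fun x hx => hasDerivAt_rpow_const <| Or.inl <| by
      rw [min_eq_left zero_le_one] at hx; exact hx.1.ne')
    hg' ((intervalIntegrable_rpow' (by linarith)).const_mul s)
  simpa [zero_rpow hs.ne'] using hibp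

theorem norm_mul_rpow_mul_log_le {C t x : ℝ} (hC : ∀ y ∈ Icc (0:ℝ) 1, ‖h y‖ ≤ C)
    (hx : x ∈ Ioc (0:ℝ) 1) (ht : 0 ≤ t) : ‖h x * x ^ t * log x‖ ≤ C * ‖log x‖ := by
  have hxt : ‖x ^ t‖ ≤ 1 := by
    rw [norm_of_nonneg (rpow_nonneg hx.1.le t)]; exact rpow_le_one hx.1.le hx.2 ht
  rw [norm_mul, norm_mul]
  gcongr
  calc ‖h x‖ * ‖x ^ t‖ ≤ C * 1 := by
        gcongr
        · exact (norm_nonneg _).trans (hC 0 (by simp))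
        · exact hC x (Ioc_subset_Icc_self hx)
    _ = C := mul_one C

theorem intervalIntegrable_mul_rpow_mul_log (hh : ContinuousOn h (Icc 0 1)) (hs : 0 ≤ s) :
    IntervalIntegrable (fun x => h x * x ^ s * log x) volume 0 1 := by
  obtain ⟨C, hC⟩ := isCompact_Icc.exists_bound_of_continuousOn hh
  have hcont : ContinuousOn (fun x => h x * x ^ s * log x) (Ioc 0 1) :=
    ((hh.mono Ioc_subset_Icc_self).mul (continuousOn_id.rpow_const fun _ _ => Or.inr hs)).mul
      (continuousOn_log.mono fun x hx => hx.1.ne')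
  refine (intervalIntegrable_log'.norm.const_mul C).mono_fun' ?_ ?_
  · rw [uIoc_of_le zero_le_one]; exact hcont.aestronglyMeasurable measurableSet_Ioc
  · rw [uIoc_of_le zero_le_one]
    exact (ae_restrict_iff' measurableSet_Ioc).2 (ae_of_all _ fun x hx =>
      norm_mul_rpow_mul_log_le hC hx hs)

theorem hasDerivAt_integral_mul_rpow (hh : ContinuousOn h (Icc 0 1)) (hs : 0 < s) :
    HasDerivAt (fun t => ∫ x in (0:ℝ)..1, h x * x ^ t)
      (∫ x in (0:ℝ)..1, h x * x ^ s * log x) s := by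
  obtain ⟨C, hC⟩ := isCompact_Icc.exists_bound_of_continuousOn hh
  have hIoc : uIoc (0:ℝ) 1 = Ioc 0 1 := uIoc_of_le zero_le_one
  have hcont (t : ℝ) : ContinuousOn (fun x => h x * x ^ t) (Ioc 0 1) :=
    (hh.mono Ioc_subset_Icc_self).mul (continuousOn_id.rpow_const fun x hx => Or.inl hx.1.ne')
  refine (hasDerivAt_integral_of_dominated_loc_of_deriv_le (F' := fun t x => h x * x ^ t * log x)
    (bound := fun x => C * ‖log x‖) (Ioi_mem_nhds hs) ?_ ?_
    (intervalIntegrable_mul_rpow_mul_log hh hs.le).def'.aestronglyMeasurable ?_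
    (intervalIntegrable_log'.norm.const_mul C) ?_).2
  · exact Eventually.of_forall fun t => hIoc ▸ (hcont t).aestronglyMeasurable measurableSet_Ioc
  · refine ContinuousOn.intervalIntegrable ?_
    rw [uIcc_of_le zero_le_one]
    exact hh.mul (continuousOn_id.rpow_const fun _ _ => Or.inr hs.le)
  · refine ae_of_all _ fun x hx t ht => ?_
    exact norm_mul_rpow_mul_log_le hC (hIoc ▸ hx) (le_of_lt ht)
  · refine ae_of_all _ fun x hx t _ => ?_
    rw [hIoc] at hx
    simpa only [mul_assoc] using
      ((hasStrictDerivAt_const_rpow hx.1 t).hasDerivAt.const_mul (h x))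

end UnitInterval

theorem continuousOn_two_div_one_add_sq : ContinuousOn (fun x : ℝ => 2 / (1 + x) ^ 2) (Icc 0 1) :=
  continuousOn_const.div (by fun_prop) fun x hx => by have := hx.1; positivity

theorem xi0_eq_integral {s : ℝ} (hs : 0 < s) :
    ξ₀ s = ∫ x in (0:ℝ)..1, 2 / (1 + x) ^ 2 * x ^ s := by
  have hderiv (x : ℝ) (hx : x ∈ Ioo (0:ℝ) 1) :
      HasDerivAt (fun x => (1 - x) / (1 + x)) (-(2 / (1 + x) ^ 2)) x := by
    have hx' : 1 + x ≠ 0 := by linarith [hx.1]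
    refine (((hasDerivAt_id' x).const_sub 1).div ((hasDerivAt_id' x).const_add 1)
      hx').congr_deriv ?_
    field_simp
    ring
  rw [ξ₀, integral_unitInterval_mul_deriv_rpow
    (by fun_prop (disch := intro x hx; linarith [hx.1])) hderiv ?_ hs]
  · simp [intervalIntegral.integral_neg]
  · refine (ContinuousOn.intervalIntegrable ?_).neg
    rw [uIcc_of_le zero_le_one]
    exact continuousOn_two_div_one_add_sq

theorem xi0'_eq_integral (s : ℝ) :
    ξ₀' s = ∫ x in (0:ℝ)..1, 2 / (1 + x) ^ 2 * x ^ s * log x := by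
  rw [ξ₀']
  congr 1
  funext x
  ring

theorem hasDerivAt_xi0 {s : ℝ} (hs : 0 < s) : HasDerivAt ξ₀ (ξ₀' s) s := by
  rw [xi0'_eq_integral]
  exact (hasDerivAt_integral_mul_rpow continuousOn_two_div_one_add_sq hs).congr_of_eventuallyEq
    (eventually_of_mem (Ioi_mem_nhds hs) fun t ht => xi0_eq_integral ht)

theorem xi0'_neg {s : ℝ} (hs : 0 < s) : ξ₀' s < 0 := by
  rw [xi0'_eq_integral, ← neg_pos, ← intervalIntegral.integral_neg]
  refine intervalIntegral_pos_of_pos_on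
    (intervalIntegrable_mul_rpow_mul_log continuousOn_two_div_one_add_sq hs.le).neg
    (fun x hx => neg_pos.2 (mul_neg_of_pos_of_neg ?_ (log_neg hx.1 hx.2))) zero_lt_one
  have := hx.1
  positivity

theorem xi0_deriv_and_strictAnti :
    (∀ s ∈ Set.Ioi (0:ℝ), HasDerivAt ξ₀ (ξ₀' s) s ∧ ξ₀' s < 0) ∧
      StrictAntiOn ξ₀ (Set.Ioi 0) := by
  refine ⟨fun s hs => ⟨hasDerivAt_xi0 hs, xi0'_neg hs⟩,
    strictAntiOn_of_hasDerivWithinAt_neg (f' := ξ₀') (convex_Ioi 0) ?_ ?_ ?_⟩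
  · exact fun s hs => (hasDerivAt_xi0 hs).continuousAt.continuousWithinAt
  all_goals rw [interior_Ioi]
  · exact fun s hs => (hasDerivAt_xi0 hs).hasDerivWithinAt
  · exact fun s hs => xi0'_neg hs
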